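/- For every integer n ≥ 1 and every λ in the boundary ∂M_f of the connectedness locus, F_n(λ) ≠ 0 and |log|F_n(λ)|| ≤ t_n. -/

import Mathlib

/- STATEMENT 7:
For every n ≥ 1 and every λ in the boundary ∂M_f of the connectedness locus,
F_n(λ) ≠ 0 and |log|F_n(λ)|| ≤ t_n, where
t_n := (1/(d−1))·[(d+1)·log 2 + (2 log d)·(n−1) + 4C_B/(d−1) + (d−1)·log(√2+1)]
and C_B := sup_{λ ∈ ∂M_f, z ∈ ℂ} |log([z,∞]^d/[f_λ(z),∞])| (here formalized by
quantifying over all upper bounds C_B of that quantity). -/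

noncomputable def fc (d : ℕ) (lam z : ℂ) : ℂ := z ^ d + lam

noncomputable def chordInf (z : ℂ) : ℝ := 1 / Real.sqrt (1 + ‖z‖ ^ 2)

/-- The connectedness locus `M_f`. -/
def Mloc (d : ℕ) : Set ℂ :=
  {lam : ℂ | BddAbove (Set.range fun k : ℕ => ‖(fc d lam)^[k] 0‖)}

noncomputable def tconst (d : ℕ) (CB : ℝ) (n : ℕ) : ℝ :=
  (1 / ((d : ℝ) - 1)) * (((d : ℝ) + 1) * Real.log 2 + (2 * Real.log d) * ((n : ℝ) - 1)
    + 4 * CB / ((d : ℝ) - 1) + ((d : ℝ) - 1) * Real.log (Real.sqrt 2 + 1))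

namespace S7

lemma iter_succ (d : ℕ) (lam z : ℂ) (k : ℕ) :
    (fc d lam)^[k+1] z = ((fc d lam)^[k] z) ^ d + lam := by
  rw [Function.iterate_succ_apply']; rfl

lemma iter_one (d : ℕ) (hd : 0 < d) (lam : ℂ) : (fc d lam)^[1] 0 = lam := by
  rw [iter_succ]; simp [zero_pow hd.ne']

lemma cont_iter (d k : ℕ) : Continuous fun lam : ℂ => (fc d lam)^[k] 0 := by
  induction k with
  | zero => simpa using continuous_const
  | succ k ih =>
      have : (fun lam : ℂ => (fc d lam)^[k+1] 0)
          = fun lam : ℂ => ((fc d lam)^[k] 0) ^ d + lam := by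
        funext lam; exact iter_succ ..
      rw [this]; exact (ih.pow d).add continuous_id

lemma pow_sub_pow_norm (u v : ℂ) (C : ℝ) (hu : ‖u‖ ≤ C) (hv : ‖v‖ ≤ C) :
    ∀ k : ℕ, ‖u ^ k - v ^ k‖ ≤ k * C ^ (k-1) * ‖u - v‖ := by
  have hC : 0 ≤ C := le_trans (norm_nonneg u) hu
  intro k
  induction k with
  | zero => simp
  | succ k ih =>
      have h1 : u ^ (k+1) - v ^ (k+1) = u ^ k * (u - v) + (u ^ k - v ^ k) * v := by ring
      have h2 : ‖u ^ (k+1) - v ^ (k+1)‖ ≤ ‖u‖ ^ k * ‖u - v‖ + ‖u ^ k - v ^ k‖ * ‖v‖ := by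
        rw [h1]
        refine le_trans (norm_add_le _ _) ?_
        simp [norm_mul, norm_pow]
      have h3 : ‖u‖ ^ k ≤ C ^ k := pow_le_pow_left₀ (norm_nonneg u) hu k
      have h4 : ‖u ^ k - v ^ k‖ * ‖v‖ ≤ (k * C ^ (k-1) * ‖u - v‖) * C :=
        mul_le_mul ih hv (norm_nonneg v) (by positivity)
      have h5 : (k : ℝ) * C ^ (k-1) * ‖u - v‖ * C ≤ k * C ^ k * ‖u - v‖ := by
        cases k with
        | zero => simp
        | succ m =>
            have : C ^ (m + 1 - 1) * C = C ^ (m+1) := by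
              simp [pow_succ]
            calc (↑(m+1) : ℝ) * C ^ (m+1-1) * ‖u - v‖ * C
                = ↑(m+1) * (C ^ (m+1-1) * C) * ‖u - v‖ := by ring
              _ = ↑(m+1) * C ^ (m+1) * ‖u - v‖ := by rw [this]
              _ ≤ ↑(m+1) * C ^ (m+1) * ‖u - v‖ := le_rfl
      have h6 : ‖u‖ ^ k * ‖u - v‖ ≤ C ^ k * ‖u - v‖ :=
        mul_le_mul_of_nonneg_right h3 (norm_nonneg (u - v))
      calc ‖u ^ (k+1) - v ^ (k+1)‖ ≤ C ^ k * ‖u - v‖ + k * C ^ k * ‖u - v‖ := by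
            linarith [le_trans h4 h5]
        _ = (↑(k+1)) * C ^ (k+1-1) * ‖u - v‖ := by push_cast; ring


def Mloc' (d : ℕ) : Set ℂ :=
  {lam : ℂ | BddAbove (Set.range fun k : ℕ => ‖(fc d lam)^[k] 0‖)}

lemma escape (d : ℕ) (hd : 1 < d) (lam z : ℂ) (hz2 : 2 < ‖z‖ ^ (d-1)) (hzl : ‖lam‖ ≤ ‖z‖) :
    ∀ j : ℕ, (‖z‖ ^ (d-1) - 1) ^ j * ‖z‖ ≤ ‖(fc d lam)^[j] z‖ := by
  set c : ℝ := ‖z‖ ^ (d-1) - 1 with hc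
  have hc1 : 1 < c := by linarith
  have hz0 : 0 < ‖z‖ := by
    by_contra h
    push_neg at h
    have : ‖z‖ = 0 := le_antisymm h (norm_nonneg z)
    rw [this] at hz2
    simp [zero_pow (by omega : d - 1 ≠ 0)] at hz2
    linarith
  intro j
  induction j with
  | zero => simp
  | succ j ih =>
      set w := (fc d lam)^[j] z with hw
      have hwz : ‖z‖ ≤ ‖w‖ := by
        calc ‖z‖ = 1 * ‖z‖ := (one_mul _).symm
          _ ≤ c ^ j * ‖z‖ := by
              apply mul_le_mul_of_nonneg_right _ hz0.le
              exact one_le_pow₀ hc1.le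
          _ ≤ ‖w‖ := ih
      have hpow : ‖z‖ ^ (d-1) ≤ ‖w‖ ^ (d-1) := pow_le_pow_left₀ (norm_nonneg z) hwz _
      have key : c * ‖w‖ ≤ ‖(fc d lam) w‖ := by
        have h1 : ‖w ^ d‖ ≤ ‖w ^ d + lam‖ + ‖lam‖ := by
          calc ‖w ^ d‖ = ‖(w ^ d + lam) - lam‖ := by ring_nf
            _ ≤ ‖w ^ d + lam‖ + ‖lam‖ := norm_sub_le _ _
        have h2 : ‖w ^ d‖ = ‖w‖ ^ (d-1) * ‖w‖ := by
          rw [norm_pow, ← pow_succ]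
          congr 1
          omega
        have h3 : ‖lam‖ ≤ ‖w‖ := le_trans hzl hwz
        have h4 : ‖z‖ ^ (d-1) * ‖w‖ ≤ ‖w‖ ^ (d-1) * ‖w‖ :=
          mul_le_mul_of_nonneg_right hpow (norm_nonneg w)
        have : ‖(fc d lam) w‖ = ‖w ^ d + lam‖ := rfl
        rw [this]
        nlinarith
      calc c ^ (j+1) * ‖z‖ = c * (c ^ j * ‖z‖) := by ring
        _ ≤ c * ‖w‖ := by
            apply mul_le_mul_of_nonneg_left ih (by linarith)
        _ ≤ ‖(fc d lam)^[j+1] z‖ := by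
            rw [Function.iterate_succ_apply']
            exact key

lemma bound_of_mem (d : ℕ) (hd : 1 < d) (lam : ℂ) (hlam : lam ∈ Mloc' d) (k : ℕ) :
    ‖(fc d lam)^[k] 0‖ ^ (d-1) ≤ 2 := by
  obtain ⟨M, hM⟩ := hlam
  have hM' : ∀ j : ℕ, ‖(fc d lam)^[j] 0‖ ≤ M := fun j => hM ⟨j, rfl⟩
  -- main claim: no orbit point with big power and norm ≥ ‖lam‖
  have main : ∀ K : ℕ, 2 < ‖(fc d lam)^[K] 0‖ ^ (d-1) → ‖lam‖ ≤ ‖(fc d lam)^[K] 0‖ → False := by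
    intro K h2 hl
    set z := (fc d lam)^[K] 0 with hz
    have hz0 : 0 < ‖z‖ := by
      by_contra h
      push_neg at h
      have : ‖z‖ = 0 := le_antisymm h (norm_nonneg z)
      rw [this] at h2
      simp [zero_pow (by omega : d - 1 ≠ 0)] at h2
      linarith
    set c : ℝ := ‖z‖ ^ (d-1) - 1 with hc
    have hc1 : 1 < c := by linarith
    obtain ⟨j, hj⟩ := pow_unbounded_of_one_lt (M / ‖z‖) hc1
    have hj2 : M < c ^ j * ‖z‖ := by
      rw [div_lt_iff₀ hz0] at hj
      linarith
    have := escape d hd lam z h2 hl j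
    have heq : (fc d lam)^[j] z = (fc d lam)^[j + K] 0 := by
      rw [Function.iterate_add_apply]
    rw [heq] at this
    exact absurd (le_trans this (hM' (j + K))) (by linarith)
  by_contra h
  push_neg at h
  by_cases hl : ‖lam‖ ≤ ‖(fc d lam)^[k] 0‖
  · exact main k h hl
  · push_neg at hl
    have h2 : 2 < ‖lam‖ ^ (d-1) := by
      calc 2 < ‖(fc d lam)^[k] 0‖ ^ (d-1) := h
        _ ≤ ‖lam‖ ^ (d-1) := pow_le_pow_left₀ (norm_nonneg _) hl.le _
    have : lam = (fc d lam)^[1] 0 := (iter_one d (by omega) lam).symm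
    apply main 1 (by rw [← this]; exact h2) (by rw [← this])

lemma mem_of_bound (d : ℕ) (lam : ℂ) (M : ℝ) (h : ∀ k : ℕ, ‖(fc d lam)^[k] 0‖ ≤ M) :
    lam ∈ Mloc' d := by
  exact ⟨M, by rintro x ⟨k, rfl⟩; exact h k⟩

lemma norm_le_two (d : ℕ) (hd : 1 < d) (x : ℝ) (hx : 0 ≤ x) (h : x ^ (d-1) ≤ 2) : x ≤ 2 := by
  by_contra hc
  push_neg at hc
  have h1 : (1:ℝ) ≤ x := by linarith
  have := le_self_pow₀ h1 (by omega : d - 1 ≠ 0)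
  linarith

lemma Mloc'_eq (d : ℕ) (hd : 1 < d) :
    Mloc' d = ⋂ k : ℕ, {lam : ℂ | ‖(fc d lam)^[k] 0‖ ^ (d-1) ≤ 2} := by
  ext lam
  simp only [Set.mem_iInter, Set.mem_setOf_eq]
  constructor
  · exact fun h k => bound_of_mem d hd lam h k
  · intro h
    exact mem_of_bound d lam 2 fun k => norm_le_two d hd _ (norm_nonneg _) (h k)

lemma Mloc'_closed (d : ℕ) (hd : 1 < d) : IsClosed (Mloc' d) := by
  rw [Mloc'_eq d hd]
  apply isClosed_iInter
  intro k
  exact isClosed_le (((cont_iter d k).norm).pow _) continuous_const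


lemma approx (d n : ℕ) (lam : ℂ) :
    ∀ ε : ℝ, 0 < ε → ∃ η : ℝ, 0 < η ∧ ∀ lam' : ℂ, dist lam' lam < η →
      ∀ k ≤ n, ‖(fc d lam')^[k] 0 - (fc d lam)^[k] 0‖ ≤ ε := by
  induction n with
  | zero =>
      intro ε hε
      exact ⟨1, one_pos, fun lam' _ k hk => by
        interval_cases k
        simpa using hε.le⟩
  | succ n ih =>
      intro ε hε
      obtain ⟨η₁, hη₁, h1⟩ := ih ε hε
      have hcont : ContinuousAt (fun lam : ℂ => (fc d lam)^[n+1] 0) lam :=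
        (cont_iter d (n+1)).continuousAt
      rw [Metric.continuousAt_iff] at hcont
      obtain ⟨η₂, hη₂, h2⟩ := hcont ε hε
      refine ⟨min η₁ η₂, lt_min hη₁ hη₂, fun lam' hd' k hk => ?_⟩
      rcases Nat.lt_or_ge k (n+1) with hk' | hk'
      · exact h1 lam' (lt_of_lt_of_le hd' (min_le_left _ _)) k (by omega)
      · have hkeq : k = n + 1 := by omega
        subst hkeq
        have := h2 (lt_of_lt_of_le hd' (min_le_right _ _))
        rw [dist_eq_norm] at this
        exact this.le


lemma xexp_bound (c y : ℝ) (hc : 0 < c) (hy : 0 ≤ y) :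
    y * Real.exp (-(y * c)) ≤ 1 / (c * Real.exp 1) := by
  rcases eq_or_lt_of_le hy with h0 | h0
  · rw [← h0]; rw [zero_mul]; positivity
  · have h1 : y * c * Real.exp 1 ≤ Real.exp (y * c) := by
      have := Real.add_one_le_exp (y * c - 1)
      have h2 : Real.exp (y * c - 1) = Real.exp (y * c) / Real.exp 1 := by
        rw [Real.exp_sub]
      rw [h2] at this
      have h3 : 0 < Real.exp 1 := Real.exp_pos 1
      calc y * c * Real.exp 1 ≤ (Real.exp (y*c) / Real.exp 1) * Real.exp 1 := by
            apply mul_le_mul_of_nonneg_right _ h3.le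
            linarith
        _ = Real.exp (y * c) := by field_simp
    have hgoal : y * (Real.exp (y * c))⁻¹ * (c * Real.exp 1) ≤ 1 := by
      calc y * (Real.exp (y * c))⁻¹ * (c * Real.exp 1)
          = (y * c * Real.exp 1) * (Real.exp (y * c))⁻¹ := by ring
        _ ≤ Real.exp (y * c) * (Real.exp (y * c))⁻¹ := by
            apply mul_le_mul_of_nonneg_right h1 (by positivity)
        _ = 1 := by field_simp
    rw [Real.exp_neg, le_div_iff₀ (by positivity)]
    exact hgoal

/-- log-scale constants for the trapping argument. -/
noncomputable def lbC (d n : ℕ) : ℝ :=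
  Real.log 2 + ((d:ℝ) - 1) * Real.log (Real.sqrt 2 + 1) / (max (n-1) 1 : ℕ)

noncomputable def lLC (d n : ℕ) : ℝ := ((n-1 : ℕ) : ℝ) * (Real.log d + lbC d n)

noncomputable def lrC (d n : ℕ) : ℝ :=
  -((Real.log 2 + Real.log d) + lLC d n) / ((d:ℝ) - 1)

noncomputable def tconst' (d : ℕ) (CB : ℝ) (n : ℕ) : ℝ :=
  (1 / ((d : ℝ) - 1)) * (((d : ℝ) + 1) * Real.log 2 + (2 * Real.log d) * ((n : ℝ) - 1)
    + 4 * CB / ((d : ℝ) - 1) + ((d : ℝ) - 1) * Real.log (Real.sqrt 2 + 1))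

lemma log_d_le (d : ℕ) (hd : 1 < d) : Real.log d ≤ ((d:ℝ) - 1) * Real.log 2 := by
  have h1 : d ≤ 2 ^ (d - 1) := by
    have := Nat.lt_two_pow_self (n := d - 1)
    omega
  have h2 : (d:ℝ) ≤ (2:ℝ) ^ (d-1 : ℕ) := by exact_mod_cast h1
  have h3 : Real.log d ≤ Real.log ((2:ℝ) ^ (d-1 : ℕ)) :=
    Real.log_le_log (by positivity) h2
  rw [Real.log_pow] at h3
  have h4 : ((d - 1:ℕ):ℝ) = (d:ℝ) - 1 := by
    push_cast [Nat.cast_sub hd.le]; ring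
  rw [h4] at h3
  exact h3

lemma tconst_ge (d n : ℕ) (hd : 1 < d) (hn : 1 ≤ n) (CB : ℝ) (hCB0 : 0 ≤ CB) :
    Real.exp (-(tconst' d CB n)) ≤ Real.exp (lrC d n) / 2 := by
  have hd2 : (2:ℝ) ≤ (d:ℝ) := by exact_mod_cast hd
  obtain ⟨c1, hc1def⟩ : ∃ c1 : ℝ, c1 = (d:ℝ) - 1 := ⟨_, rfl⟩
  have hc1 : 0 < c1 := by rw [hc1def]; linarith
  obtain ⟨s, hsdef⟩ : ∃ s : ℝ, s = Real.sqrt 2 + 1 := ⟨_, rfl⟩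
  have hs2 : (2:ℝ) ≤ s := by
    have : (1:ℝ) ≤ Real.sqrt 2 := by
      rw [show (1:ℝ) = Real.sqrt 1 from (Real.sqrt_one).symm]
      exact Real.sqrt_le_sqrt (by norm_num)
    rw [hsdef]; linarith
  have hlog2 : (0:ℝ) < Real.log 2 := Real.log_pos (by norm_num)
  have hlogs : Real.log 2 ≤ Real.log s := Real.log_le_log (by norm_num) hs2
  have hlogd : Real.log 2 ≤ Real.log d := Real.log_le_log (by norm_num) hd2
  have hdlog : Real.log d ≤ c1 * Real.log 2 := by rw [hc1def]; exact log_d_le d hd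
  have hCBc : 0 ≤ 4 * CB / c1 := by positivity
  rw [show Real.exp (lrC d n) / 2 = Real.exp (lrC d n - Real.log 2) by
    rw [Real.exp_sub, Real.exp_log two_pos]]
  apply Real.exp_le_exp.mpr
  -- reduces to : (log 2 + log d) + lLC + c1 * log 2 ≤ c1 * tconst'
  have hkey : (Real.log 2 + Real.log d) + lLC d n + c1 * Real.log 2 ≤ c1 * tconst' d CB n := by
    have htc : c1 * tconst' d CB n = ((d:ℝ) + 1) * Real.log 2
        + (2 * Real.log d) * ((n:ℝ) - 1) + 4 * CB / c1 + c1 * Real.log s := by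
      rw [tconst', ← hc1def, ← hsdef, ← mul_assoc, mul_one_div, div_self hc1.ne', one_mul]
    rw [htc]
    have hN : ((n - 1:ℕ):ℝ) = (n:ℝ) - 1 := by
      push_cast [Nat.cast_sub hn]; ring
    rcases Nat.lt_or_ge n 2 with hn2 | hn2
    · -- n = 1
      have hn1 : n = 1 := by omega
      subst hn1
      have hlL : lLC d 1 = 0 := by
        simp [lLC]
      rw [hlL]
      have hcs : c1 * Real.log 2 ≤ c1 * Real.log s := by
        apply mul_le_mul_of_nonneg_left hlogs hc1.le
      simp only [Nat.cast_one]
      have hd1 : ((d:ℝ) + 1) * Real.log 2 = c1 * Real.log 2 + 2 * Real.log 2 := by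
        rw [hc1def]; ring
      rw [hd1]
      have : (2 * Real.log ↑d) * ((1:ℝ) - 1) = 0 := by ring
      rw [this]
      linarith
    · -- n ≥ 2 : m = n - 1
      have hm : (max (n-1) 1 : ℕ) = n - 1 := max_eq_left (by omega)
      have hN1 : (1:ℝ) ≤ ((n-1:ℕ):ℝ) := by
        have : (1:ℕ) ≤ n - 1 := by omega
        exact_mod_cast this
      have hNne : ((n-1:ℕ):ℝ) ≠ 0 := by linarith
      have hlL : lLC d n = ((n-1:ℕ):ℝ) * (Real.log d + Real.log 2) + c1 * Real.log s := by
        rw [lLC, lbC, ← hc1def, ← hsdef, hm]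
        have hsplit : (Real.log ↑d + (Real.log 2 + c1 * Real.log s / ((n-1:ℕ):ℝ)))
            = (Real.log ↑d + Real.log 2) + (c1 * Real.log s / ((n-1:ℕ):ℝ)) := by ring
        rw [hsplit, mul_add, mul_div_cancel₀ _ hNne]
      rw [hlL]
      rw [← hN]
      obtain ⟨N, hNdef⟩ : ∃ N : ℝ, N = ((n-1:ℕ):ℝ) := ⟨_, rfl⟩
      rw [← hNdef]
      have hprod : 0 ≤ (N - 1) * (Real.log d - Real.log 2) :=
        mul_nonneg (by linarith) (by linarith)
      have hexp : ((d:ℝ) + 1) * Real.log 2 = c1 * Real.log 2 + 2 * Real.log 2 := by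
        rw [hc1def]; ring
      rw [hexp]
      nlinarith [hprod, hlogd, hlog2, hN1, hCBc]
  -- conclude
  rw [lrC, ← hc1def, neg_div]
  have h4 := div_le_div_of_nonneg_right hkey hc1.le
  rw [mul_div_cancel_left₀ _ hc1.ne'] at h4
  rw [add_div, mul_div_cancel_left₀ _ hc1.ne'] at h4
  linarith

lemma log2_le_tconst (d n : ℕ) (hd : 1 < d) (hn : 1 ≤ n) (CB : ℝ) (hCB0 : 0 ≤ CB) :
    Real.log 2 ≤ tconst' d CB n := by
  have hd2 : (2:ℝ) ≤ (d:ℝ) := by exact_mod_cast hd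
  obtain ⟨c1, hc1def⟩ : ∃ c1 : ℝ, c1 = (d:ℝ) - 1 := ⟨_, rfl⟩
  have hc1 : 0 < c1 := by rw [hc1def]; linarith
  have htc : c1 * tconst' d CB n = ((d:ℝ) + 1) * Real.log 2
      + (2 * Real.log d) * ((n:ℝ) - 1) + 4 * CB / c1 + c1 * Real.log (Real.sqrt 2 + 1) := by
    rw [tconst', ← hc1def, ← mul_assoc, mul_one_div, div_self hc1.ne', one_mul]
  have hlog2 : 0 < Real.log 2 := Real.log_pos (by norm_num)
  have hlogd0 : 0 ≤ Real.log d := Real.log_nonneg (by exact_mod_cast hd.le)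
  have hn1 : (1:ℝ) ≤ (n:ℝ) := by exact_mod_cast hn
  have hs0 : 0 ≤ Real.log (Real.sqrt 2 + 1) :=
    Real.log_nonneg (by nlinarith [Real.sqrt_nonneg 2])
  have hcb : 0 ≤ 4*CB/c1 := by positivity
  have key : c1 * Real.log 2 ≤ c1 * tconst' d CB n := by
    rw [htc]
    have h5 : 0 ≤ (2*Real.log d) * ((n:ℝ)-1) := mul_nonneg (by linarith) (by linarith)
    have h6 : 0 ≤ c1 * Real.log (Real.sqrt 2 + 1) := mul_nonneg hc1.le hs0
    have h7 : c1 * Real.log 2 ≤ ((d:ℝ)+1) * Real.log 2 := by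
      apply mul_le_mul_of_nonneg_right _ hlog2.le
      rw [hc1def]; linarith
    linarith
  exact le_of_mul_le_mul_left key hc1

set_option maxHeartbeats 1000000 in
lemma lower (d : ℕ) (hd : 1 < d) (t : ℝ) (lam : ℂ)
    (hmem : ∀ k : ℕ, ‖(fc d lam)^[k] 0‖ ^ (d-1) ≤ 2)
    (hnotint : lam ∉ interior (Mloc' d))
    (n : ℕ) (hn : 1 ≤ n)
    (hA : Real.exp (-t) ≤ Real.exp (lrC d n) / 2) :
    Real.exp (-t) ≤ ‖(fc d lam)^[n] 0‖ := by
  by_contra hF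
  push_neg at hF
  -- basic positivity facts
  have hd0 : (0:ℝ) < d := by positivity
  have hd2 : (2:ℝ) ≤ (d:ℝ) := by exact_mod_cast hd
  set c1 : ℝ := (d:ℝ) - 1 with hc1def
  have hc1 : 0 < c1 := by simp only [hc1def]; linarith
  have h1c1 : 1 ≤ c1 := by simp only [hc1def]; linarith
  have hcast : ((d - 1 : ℕ) : ℝ) = c1 := by
    simp only [hc1def]
    push_cast [Nat.cast_sub hd.le]
    ring
  set s : ℝ := Real.sqrt 2 + 1 with hsdef
  have hs2 : (2:ℝ) ≤ s := by
    have : (1:ℝ) ≤ Real.sqrt 2 := by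
      rw [show (1:ℝ) = Real.sqrt 1 from (Real.sqrt_one).symm]
      exact Real.sqrt_le_sqrt (by norm_num)
    simp only [hsdef]; linarith
  have hlog2 : (1/2 : ℝ) < Real.log 2 := by
    have := Real.log_two_gt_d9; norm_num at this ⊢; linarith
  have hlogs : Real.log 2 ≤ Real.log s := Real.log_le_log (by norm_num) hs2
  have hlogd : Real.log 2 ≤ Real.log d := Real.log_le_log (by norm_num) hd2
  have hlogd0 : 0 ≤ Real.log d := by linarith
  set m : ℕ := max (n-1) 1 with hmdef
  have hm1 : 1 ≤ m := le_max_right _ _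
  have hm0 : (0:ℝ) < (m:ℝ) := by exact_mod_cast hm1
  have hnm : (n - 1 : ℕ) ≤ m := le_max_left _ _
  have hmn : m ≤ n := by omega
  have hlb : Real.log 2 ≤ lbC d n := by
    have : 0 ≤ c1 * Real.log s / (m:ℝ) :=
      div_nonneg (mul_nonneg hc1.le (by linarith)) hm0.le
    simp only [lbC, ← hc1def, ← hsdef, ← hmdef]
    linarith
  have hlb0 : 0 < lbC d n := by linarith
  have hlL0 : 0 ≤ lLC d n := by
    have : 0 ≤ Real.log d + lbC d n := by linarith
    exact mul_nonneg (by positivity) this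
  -- the radii
  set b : ℝ := Real.exp (lbC d n) with hbdef
  set B : ℝ := Real.exp (lbC d n / c1) with hBdef
  set ρ : ℝ := Real.exp (Real.log 2 / c1) with hρdef
  set L : ℝ := Real.exp (lLC d n) with hLdef
  set r : ℝ := Real.exp (lrC d n) with hrdef
  have hr0 : 0 < r := Real.exp_pos _
  have hρ1 : 1 ≤ ρ := Real.one_le_exp (by positivity)
  have hb2 : 2 ≤ b := by
    rw [hbdef, show (2:ℝ) = Real.exp (Real.log 2) from (Real.exp_log two_pos).symm]
    exact Real.exp_le_exp.mpr hlb
  have hL1 : 1 ≤ L := Real.one_le_exp hlL0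
  have hr1 : r ≤ 1 := by
    rw [hrdef, show (1:ℝ) = Real.exp 0 from (Real.exp_zero).symm]
    apply Real.exp_le_exp.mpr
    rw [lrC]
    apply div_nonpos_of_nonpos_of_nonneg _ (by linarith : (0:ℝ) ≤ (d:ℝ) - 1)
    linarith
  have hρB : ρ ≤ B := by
    rw [hρdef, hBdef]
    exact Real.exp_le_exp.mpr (div_le_div_of_nonneg_right hlb hc1.le)
  -- power identities
  have hexp_pow : ∀ x : ℝ, Real.exp x ^ (d-1) = Real.exp (c1 * x) := by
    intro x
    rw [← Real.exp_nat_mul, hcast]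
  have hρpow : ρ ^ (d-1) = 2 := by
    rw [hρdef, hexp_pow, mul_div_cancel₀ _ hc1.ne', Real.exp_log two_pos]
  have hBpow : B ^ (d-1) = b := by
    rw [hBdef, hexp_pow, mul_div_cancel₀ _ hc1.ne', hbdef]
  have hrpow : r ^ (d-1) = Real.exp (-((Real.log 2 + Real.log d) + lLC d n)) := by
    rw [hrdef, hexp_pow, lrC, ← hc1def, mul_div_cancel₀ _ hc1.ne']
  have hLr : L * r ^ d = r / (2 * d) := by
    have hsplit : d = (d - 1) + 1 := by omega
    have hrd : r ^ d = r ^ (d-1) * r := by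
      conv_lhs => rw [hsplit]
      rw [pow_succ]
    rw [hrd, hrpow, hLdef, ← mul_assoc, ← Real.exp_add]
    have : lLC d n + -(Real.log 2 + Real.log ↑d + lLC d n) = -(Real.log 2 + Real.log ↑d) := by
      ring
    rw [this, Real.exp_neg, Real.exp_add, Real.exp_log two_pos, Real.exp_log hd0]
    ring
  have hrd_small : r ^ d ≤ r / (2 * d) := by
    rw [← hLr]
    have h0 : 0 ≤ r ^ d := by positivity
    exact le_mul_of_one_le_left h0 hL1
  have hLeq : L = ((d:ℝ) * b) ^ (n-1) := by
    have hdb : (d:ℝ) * b = Real.exp (Real.log d + lbC d n) := by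
      rw [Real.exp_add, Real.exp_log hd0, hbdef]
    rw [hdb, ← Real.exp_nat_mul, hLdef, lLC]
  -- gap bound : log 2 / m ≤ B - ρ
  have hBρexp : B = ρ * Real.exp (Real.log s / (m:ℝ)) := by
    rw [hBdef, hρdef, ← Real.exp_add]
    congr 1
    rw [lbC, ← hc1def, ← hsdef, ← hmdef, add_div, mul_div_assoc,
      mul_div_cancel_left₀ _ hc1.ne']
  have hgapB : Real.log 2 / (m:ℝ) ≤ B - ρ := by
    have hx : 0 ≤ Real.log s / (m:ℝ) := div_nonneg (by linarith) hm0.le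
    have h1 : Real.log s / (m:ℝ) + 1 ≤ Real.exp (Real.log s / (m:ℝ)) := Real.add_one_le_exp _
    have h2 : Real.log 2 / (m:ℝ) ≤ Real.log s / (m:ℝ) :=
      div_le_div_of_nonneg_right hlogs hm0.le
    have h3 : Real.log s / (m:ℝ) ≤ ρ * (Real.log s / (m:ℝ) + 1) - ρ := by
      have h4 : (1:ℝ) * (Real.log s / (m:ℝ)) ≤ ρ * (Real.log s / (m:ℝ)) :=
        mul_le_mul_of_nonneg_right hρ1 hx
      have h5 : ρ * (Real.log s / (m:ℝ) + 1) - ρ = ρ * (Real.log s / (m:ℝ)) := by ring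
      rw [h5]; linarith
    have h6 : ρ * (Real.log s / (m:ℝ) + 1) ≤ ρ * Real.exp (Real.log s / (m:ℝ)) :=
      mul_le_mul_of_nonneg_left h1 (by linarith)
    calc Real.log 2 / (m:ℝ) ≤ Real.log s / (m:ℝ) := h2
      _ ≤ ρ * (Real.log s / (m:ℝ) + 1) - ρ := h3
      _ ≤ ρ * Real.exp (Real.log s / (m:ℝ)) - ρ := by linarith
      _ = B - ρ := by rw [hBρexp]
  have hgap0 : 0 < B - ρ := lt_of_lt_of_le (by positivity) hgapB
  -- small radius : m * r ≤ d * log 2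
  have hmr : (m:ℝ) * r ≤ (d:ℝ) * Real.log 2 := by
    set c : ℝ := (Real.log 2 + Real.log d) / c1 with hcdef
    have hcpos : 0 < c := by
      apply div_pos _ hc1
      linarith
    have hl0 : (0:ℝ) ≤ Real.log 2 + Real.log d := by linarith
    have hrle : r ≤ Real.exp (-((m:ℝ) * c)) := by
      rw [hrdef]
      apply Real.exp_le_exp.mpr
      have hnm' : (m:ℝ) - 1 ≤ ((n-1:ℕ):ℝ) := by
        have h1 : ((m - 1:ℕ):ℝ) ≤ ((n-1:ℕ):ℝ) := Nat.cast_le.mpr (Nat.sub_le_sub_right hmn 1)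
        have h2 : ((m - 1:ℕ):ℝ) = (m:ℝ) - 1 := by
          push_cast [Nat.cast_sub hm1]; ring
        linarith
      have hlLlb : ((n-1:ℕ):ℝ) * (Real.log 2 + Real.log ↑d) ≤ lLC d n := by
        rw [lLC]
        apply mul_le_mul_of_nonneg_left _ (by positivity)
        linarith
      have hnum : (m:ℝ) * (Real.log 2 + Real.log ↑d) ≤ (Real.log 2 + Real.log ↑d) + lLC d n := by
        have h3 : ((m:ℝ) - 1) * (Real.log 2 + Real.log ↑d) ≤ ((n-1:ℕ):ℝ) * (Real.log 2 + Real.log ↑d) :=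
          mul_le_mul_of_nonneg_right hnm' hl0
        have h4 : (m:ℝ) * (Real.log 2 + Real.log ↑d)
            = ((m:ℝ) - 1) * (Real.log 2 + Real.log ↑d) + (Real.log 2 + Real.log ↑d) := by ring
        linarith
      rw [lrC, hcdef, ← hc1def]
      have heq : (m:ℝ) * ((Real.log 2 + Real.log ↑d)/c1) = ((m:ℝ) * (Real.log 2 + Real.log ↑d))/c1 := by
        ring
      rw [heq, ← neg_div]
      apply div_le_div_of_nonneg_right _ hc1.le
      linarith
    have hmr1 : (m:ℝ) * r ≤ 1/(c * Real.exp 1) := by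
      calc (m:ℝ) * r ≤ (m:ℝ) * Real.exp (-((m:ℝ)*c)) :=
            mul_le_mul_of_nonneg_left hrle hm0.le
        _ ≤ 1/(c * Real.exp 1) := xexp_bound c (m:ℝ) hcpos hm0.le
    have he2 : (2:ℝ) ≤ Real.exp 1 := by
      have := Real.add_one_le_exp 1; linarith
    have hcl : 1/c1 ≤ c := by
      rw [hcdef]
      exact div_le_div_of_nonneg_right (by linarith) hc1.le
    have hfin : 1/(c * Real.exp 1) ≤ c1/2 := by
      have hc1inv : 0 < 1/c1 := by positivity
      have h1 : (1/c1) * 2 ≤ c * Real.exp 1 :=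
        mul_le_mul hcl he2 (by norm_num) (le_trans hc1inv.le hcl)
      have h4 : (0:ℝ) < 2/c1 := by positivity
      have h5 : 2/c1 ≤ c * Real.exp 1 := by
        calc 2/c1 = (1/c1) * 2 := by ring
          _ ≤ c * Real.exp 1 := h1
      have h6 := one_div_le_one_div_of_le h4 h5
      calc 1/(c * Real.exp 1) ≤ 1/(2/c1) := h6
        _ = c1/2 := one_div_div 2 c1
    have hc1d : c1 ≤ (d:ℝ) := by rw [hc1def]; linarith
    calc (m:ℝ)*r ≤ 1/(c*Real.exp 1) := hmr1
      _ ≤ c1/2 := hfin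
      _ ≤ (d:ℝ) * Real.log 2 := by
          have h7 : (d:ℝ) * (1/2) ≤ (d:ℝ) * Real.log 2 :=
            mul_le_mul_of_nonneg_left hlog2.le (by positivity)
          linarith
  -- orbit of lam is bounded by ρ
  have hFρ : ∀ k : ℕ, ‖(fc d lam)^[k] 0‖ ≤ ρ := by
    intro k
    have h1 := hmem k
    rw [← hρpow] at h1
    exact le_of_pow_le_pow_left₀ (by omega) (Real.exp_pos _).le h1
  set β : ℝ := min (Real.exp (-t) - ‖(fc d lam)^[n] 0‖) ((B - ρ)/2) with hβdef
  have hβ0 : 0 < β := lt_min (by linarith) (by linarith)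
  have hβ1 : β ≤ Real.exp (-t) - ‖(fc d lam)^[n] 0‖ := min_le_left _ _
  have hβ2 : β ≤ (B - ρ)/2 := min_le_right _ _
  obtain ⟨η, hη0, hηap⟩ := approx d n lam β hβ0
  have hdb1 : (1:ℝ) ≤ (d:ℝ) * b := by nlinarith
  have hr2d : r/(2*(d:ℝ)) ≤ (B - ρ)/2 := by
    have h1 : r/(2*(d:ℝ)) ≤ Real.log 2/(m:ℝ)/2 := by
      rw [div_le_div_iff₀ (by positivity) (by positivity), div_mul_eq_mul_div,
        le_div_iff₀ (by positivity)]
      calc r * 2 * (m:ℝ) = 2 * ((m:ℝ) * r) := by ring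
        _ ≤ 2 * ((d:ℝ) * Real.log 2) := by linarith
        _ = Real.log 2 * (2 * (d:ℝ)) := by ring
    linarith [hgapB]
  have hball : Metric.ball lam η ⊆ Mloc' d := by
    intro lam' hblam'
    rw [Metric.mem_ball] at hblam'
    have hk := hηap lam' hblam'
    have hF'ρ : ∀ k, k ≤ n → ‖(fc d lam')^[k] 0‖ ≤ ρ + β := by
      intro k hkn
      have h2 : ‖(fc d lam')^[k] 0‖
          ≤ ‖(fc d lam')^[k] 0 - (fc d lam)^[k] 0‖ + ‖(fc d lam)^[k] 0‖ := by
        simpa using norm_add_le ((fc d lam')^[k] 0 - (fc d lam)^[k] 0) ((fc d lam)^[k] 0)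
      have h3 := hk k hkn
      have h4 := hFρ k
      linarith
    have trap : ∀ w : ℂ, ‖w‖ ≤ r →
        (∀ k, k ≤ n → ‖(fc d lam')^[k] w‖ ≤ B) ∧ ‖(fc d lam')^[n] w‖ ≤ r := by
      intro w hw
      have claim : ∀ k, k ≤ n → ‖(fc d lam')^[k] w‖ ≤ B ∧
          (1 ≤ k → ‖(fc d lam')^[k] w - (fc d lam')^[k] 0‖ ≤ ((d:ℝ)*b)^(k-1) * r^d) := by
        intro k
        induction k with
        | zero =>
            intro _
            refine ⟨?_, by omega⟩
            simp only [Function.iterate_zero, id_eq]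
            calc ‖w‖ ≤ r := hw
              _ ≤ 1 := hr1
              _ ≤ ρ := hρ1
              _ ≤ B := hρB
        | succ k ihk =>
            intro hk1
            have ihk' := ihk (by omega)
            have hvB : ‖(fc d lam')^[k] 0‖ ≤ B := by
              have := hF'ρ k (by omega)
              linarith
            have hdiff : ‖(fc d lam')^[k+1] w - (fc d lam')^[k+1] 0‖ ≤ ((d:ℝ)*b)^k * r^d := by
              rcases Nat.eq_zero_or_pos k with hk0 | hk0
              · subst hk0
                simp only [pow_zero, one_mul]
                rw [iter_succ, iter_succ]
                simp only [Function.iterate_zero, id_eq]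
                rw [zero_pow (by omega : d ≠ 0)]
                have heq0 : w ^ d + lam' - ((0:ℂ) + lam') = w ^ d := by ring
                rw [heq0, norm_pow]
                exact pow_le_pow_left₀ (norm_nonneg w) hw d
              · have h1k : 1 ≤ k := hk0
                have hu := ihk'.1
                have hd2' := ihk'.2 h1k
                rw [iter_succ, iter_succ]
                have heq : (fc d lam')^[k] w ^ d + lam' - ((fc d lam')^[k] 0 ^ d + lam')
                    = (fc d lam')^[k] w ^ d - (fc d lam')^[k] 0 ^ d := by ring
                rw [heq]
                have hps := pow_sub_pow_norm ((fc d lam')^[k] w) ((fc d lam')^[k] 0) B hu hvB d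
                have hstep : (d:ℝ) * B^(d-1) * ‖(fc d lam')^[k] w - (fc d lam')^[k] 0‖
                    ≤ ((d:ℝ)*b) * (((d:ℝ)*b)^(k-1) * r^d) := by
                  rw [hBpow]
                  apply mul_le_mul_of_nonneg_left hd2' (by positivity)
                have hpoweq : ((d:ℝ)*b) * (((d:ℝ)*b)^(k-1) * r^d) = ((d:ℝ)*b)^k * r^d := by
                  rw [← mul_assoc, ← pow_succ']
                  congr 2
                  omega
                rw [hpoweq] at hstep
                exact le_trans hps hstep
            constructor
            · have h3 : ‖(fc d lam')^[k+1] w‖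
                  ≤ ‖(fc d lam')^[k+1] w - (fc d lam')^[k+1] 0‖ + ‖(fc d lam')^[k+1] 0‖ := by
                simpa using norm_add_le ((fc d lam')^[k+1] w - (fc d lam')^[k+1] 0)
                  ((fc d lam')^[k+1] 0)
              have h4 : ((d:ℝ)*b)^k * r^d ≤ L * r^d := by
                apply mul_le_mul_of_nonneg_right _ (by positivity)
                rw [hLeq]
                exact pow_le_pow_right₀ hdb1 (by omega)
              have h5 := hF'ρ (k+1) hk1
              rw [hLr] at h4
              linarith
            · intro _
              have hsimp : k + 1 - 1 = k := by omega
              rw [hsimp]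
              exact hdiff
      refine ⟨fun k hkn => (claim k hkn).1, ?_⟩
      have hcl := (claim n le_rfl).2 hn
      have h3 : ‖(fc d lam')^[n] w‖
          ≤ ‖(fc d lam')^[n] w - (fc d lam')^[n] 0‖ + ‖(fc d lam')^[n] 0‖ := by
        simpa using norm_add_le ((fc d lam')^[n] w - (fc d lam')^[n] 0) ((fc d lam')^[n] 0)
      have h4 : ((d:ℝ)*b)^(n-1) * r^d = L * r^d := by rw [hLeq]
      rw [hLr] at h4
      have h5 : ‖(fc d lam')^[n] 0‖
          ≤ ‖(fc d lam')^[n] 0 - (fc d lam)^[n] 0‖ + ‖(fc d lam)^[n] 0‖ := by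
        simpa using norm_add_le ((fc d lam')^[n] 0 - (fc d lam)^[n] 0) ((fc d lam)^[n] 0)
      have h6 := hk n le_rfl
      have h7 : r/(2*(d:ℝ)) ≤ r/4 := by
        apply div_le_div_of_nonneg_left hr0.le (by norm_num) (by linarith)
      linarith [hA, hβ1]
    have horb : ∀ j : ℕ, ‖(fc d lam')^[n*j] 0‖ ≤ r := by
      intro j
      induction j with
      | zero => simpa using hr0.le
      | succ j ihj =>
          have hnj : n*(j+1) = n + n*j := by ring
          rw [hnj, Function.iterate_add_apply]
          exact (trap _ ihj).2
    apply mem_of_bound d lam' B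
    intro k
    have hdm : k % n < n := Nat.mod_lt _ (by omega)
    have hdecomp : k = k % n + n * (k / n) := by
      rw [Nat.mod_add_div]
    rw [hdecomp, Function.iterate_add_apply]
    exact (trap _ (horb (k / n))).1 (k % n) (by omega)
  exact hnotint (mem_interior.mpr
    ⟨Metric.ball lam η, hball, Metric.isOpen_ball, Metric.mem_ball_self hη0⟩)

end S7


theorem statement7 (d : ℕ) (hd : 1 < d) (CB : ℝ)
    (hCB : ∀ lam ∈ frontier (Mloc d), ∀ z : ℂ,
      |Real.log (chordInf z ^ d / chordInf (fc d lam z))| ≤ CB)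
    (n : ℕ) (hn : 1 ≤ n) (lam : ℂ) (hlam : lam ∈ frontier (Mloc d)) :
    (fc d lam)^[n] 0 ≠ 0 ∧ |Real.log ‖(fc d lam)^[n] 0‖| ≤ tconst d CB n := by
  have hCB0 : 0 ≤ CB := le_trans (abs_nonneg _) (hCB lam hlam 0)
  have hMeq : Mloc d = S7.Mloc' d := rfl
  have hclosed : IsClosed (Mloc d) := by rw [hMeq]; exact S7.Mloc'_closed d hd
  have hlamM : lam ∈ Mloc d := by
    have h1 : lam ∈ closure (Mloc d) := hlam.1
    rwa [hclosed.closure_eq] at h1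
  have hmem : ∀ k, ‖(fc d lam)^[k] 0‖ ^ (d-1) ≤ 2 := fun k =>
    S7.bound_of_mem d hd lam (hMeq ▸ hlamM) k
  have hnotint : lam ∉ interior (Mloc d) := hlam.2
  have htt : tconst d CB n = S7.tconst' d CB n := rfl
  have hlow : Real.exp (-(tconst d CB n)) ≤ ‖(fc d lam)^[n] 0‖ := by
    rw [htt]
    exact S7.lower d hd _ lam hmem (by rw [← hMeq]; exact hnotint) n hn
      (S7.tconst_ge d n hd hn CB hCB0)
  have hpos : 0 < ‖(fc d lam)^[n] 0‖ := lt_of_lt_of_le (Real.exp_pos _) hlow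
  have hne : (fc d lam)^[n] 0 ≠ 0 := by
    intro h
    rw [h] at hpos
    simp at hpos
  refine ⟨hne, ?_⟩
  rw [abs_le]
  constructor
  · exact (Real.le_log_iff_exp_le hpos).mpr hlow
  · have h2 : ‖(fc d lam)^[n] 0‖ ≤ 2 := S7.norm_le_two d hd _ (norm_nonneg _) (hmem n)
    have h3 : Real.log ‖(fc d lam)^[n] 0‖ ≤ Real.log 2 := Real.log_le_log hpos h2
    have h4 : Real.log 2 ≤ tconst d CB n := by
      rw [htt]; exact S7.log2_le_tconst d n hd hn CB hCB0
    linarith
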